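/- arXiv:1511.01078 — 5 statements merged into one kernel-verified Lean document; each statement's English description precedes it below -/
import Mathlib

section
/- The determinant of the 2×2 matrix H(λ) with rows (1 - e^{-λL}, -w_λ(L)) and (∫_0^L conj(g(x)) e^{-λx} dx, ∫_0^L conj(g(x)) w_λ(x) dx - 1) equals w_λ(L) · (∫_0^L conj(g(x)) dx - λ). -/
/-!
Since `w_λ(x) = ∫₀ˣ e^{-λt} dt`, the fundamental theorem of calculus gives
`e^{-λx} = 1 - λ w_λ(x)` for every `λ`, including `λ = 0`. Substituting this into the first
column expresses `H(λ)₁₁` as `λ w_λ(L)` and `H(λ)₂₁` as `∫ ḡ - λ ∫ ḡ w_λ`; expanding the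
determinant, the terms in `∫ ḡ w_λ` cancel.
-/

open Complex MeasureTheory

theorem integral_exp_neg_mul_sub (μ : ℂ) (x : ℝ) :
    ∫ σ in (0:ℝ)..x, exp (-μ * (x - σ)) = ∫ t in (0:ℝ)..x, exp (-μ * t) := by
  have h := intervalIntegral.integral_comp_sub_left (a := 0) (b := x) (fun t : ℝ => exp (-μ * t)) x
  simp only [ofReal_sub, sub_self, sub_zero] at h
  exact h

theorem mul_integral_exp_neg_mul (μ : ℂ) (x : ℝ) :
    μ * ∫ t in (0:ℝ)..x, exp (-μ * t) = 1 - exp (-μ * x) := by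
  have hderiv : ∀ t : ℝ, HasDerivAt (fun t : ℝ => exp (-μ * t)) (-μ * exp (-μ * t)) t := by
    intro t
    simpa [mul_comm] using ((hasDerivAt_id (t : ℂ)).const_mul (-μ)).cexp.comp_ofReal
  have hcont : Continuous fun t : ℝ => -μ * exp (-μ * t) := by fun_prop
  have hFTC := intervalIntegral.integral_eq_sub_of_hasDerivAt (fun t _ => hderiv t)
    (hcont.intervalIntegrable 0 x)
  rw [intervalIntegral.integral_const_mul] at hFTC
  simp only [ofReal_zero, mul_zero, exp_zero] at hFTC
  linear_combination -hFTC

theorem continuous_integral_exp_neg_mul (μ : ℂ) :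
    Continuous fun x : ℝ => ∫ t in (0:ℝ)..x, exp (-μ * t) :=
  intervalIntegral.continuous_primitive
    (fun _ _ => (by fun_prop : Continuous fun t : ℝ => exp (-μ * t)).intervalIntegrable _ _) 0

theorem integral_mul_exp_neg_mul_eq {f : ℝ → ℂ} {L : ℝ} (hf : IntervalIntegrable f volume 0 L)
    (μ : ℂ) :
    ∫ x in (0:ℝ)..L, f x * exp (-μ * x)
      = (∫ x in (0:ℝ)..L, f x) - μ * ∫ x in (0:ℝ)..L, f x * ∫ t in (0:ℝ)..x, exp (-μ * t) := by
  have hfW : IntervalIntegrable (fun x => f x * ∫ t in (0:ℝ)..x, exp (-μ * t)) volume 0 L :=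
    hf.mul_continuousOn (continuous_integral_exp_neg_mul μ).continuousOn
  rw [← intervalIntegral.integral_const_mul, ← intervalIntegral.integral_sub hf (hfW.const_mul μ)]
  congr 1 with x
  linear_combination f x * mul_integral_exp_neg_mul μ x

theorem stmt2 (L : ℝ) (hL : 0 < L) (g : ℝ → ℂ)
    (hg : MemLp g 2 (volume.restrict (Set.Ioc 0 L))) (lam : ℂ)
    (w : ℂ → ℝ → ℂ) (hw : ∀ μ x, w μ x = ∫ σ in (0:ℝ)..x, Complex.exp (-μ * (x - σ))) :
    Matrix.det
      !![1 - Complex.exp (-lam * L), -(w lam L);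
         ∫ x in (0:ℝ)..L, (starRingEnd ℂ) (g x) * Complex.exp (-lam * x),
         (∫ x in (0:ℝ)..L, (starRingEnd ℂ) (g x) * w lam x) - 1]
      = w lam L * ((∫ x in (0:ℝ)..L, (starRingEnd ℂ) (g x)) - lam) := by
  have hw_eq : w lam = fun x => ∫ t in (0:ℝ)..x, exp (-lam * t) := by
    ext x
    rw [hw, integral_exp_neg_mul_sub]
  have hg_int : IntervalIntegrable (fun x => (starRingEnd ℂ) (g x)) volume 0 L := by
    rw [intervalIntegrable_iff_integrableOn_Ioc_of_le hL.le]
    exact hg.star.integrable (by norm_num)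
  rw [Matrix.det_fin_two_of, integral_mul_exp_neg_mul_eq hg_int, hw_eq]
  linear_combination (-(∫ x in (0:ℝ)..L, (starRingEnd ℂ) (g x) * ∫ t in (0:ℝ)..x, exp (-lam * t))
    + 1) * mul_integral_exp_neg_mul lam L
end

section
/- A function z ∈ H¹(0,L) with z(L) = z(0) satisfies λz(x) + z'(x) - ∫_0^L conj(g(σ)) z(σ) dσ = 0 for a.e. x ∈ (0,L) if and only if z(x) = a e^{-λx} + b w_λ(x) for some (a,b) ∈ ℂ² with H(λ)·(a,b)ᵀ = 0, where H(λ) is the matrix with rows (1 - e^{-λL}, -w_λ(L)) and (∫_0^L conj(g(x)) e^{-λx} dx, ∫_0^L conj(g(x)) w_λ(x) dx - 1). -/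
/-!
On `(0, L)` the eigenvalue equation is the linear ODE `z' = c - λ z` whose constant
`c = ∫ conj g · z` is unknown. Since `w_λ' = -λ w_λ + 1` and `w_λ(0) = 0`, the function
`e^{λx} (z - c w_λ)` has zero derivative, so the solutions are exactly
`z = z(0) e^{-λx} + c w_λ`. For such `z`, the first row of `H(λ) (z(0), c)ᵀ = 0` is the
periodicity `z(L) = z(0)` and the second row is the consistency condition `c = ∫ conj g · z`.
-/

open Complex MeasureTheory Set

theorem eq_of_hasDerivAt_eq_zero_on_Ioo {E : Type*} [NormedAddCommGroup E] [NormedSpace ℝ E]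
    [CompleteSpace E] {f : ℝ → E} {a b : ℝ} (hf : ContinuousOn f (Icc a b))
    (hf' : ∀ x ∈ Ioo a b, HasDerivAt f 0 x) : ∀ x ∈ Icc a b, f x = f a := by
  intro x hx
  have h := intervalIntegral.integral_eq_sub_of_hasDerivAt_of_le hx.1
    (hf.mono (Icc_subset_Icc_right hx.2)) (fun y hy => hf' y ⟨hy.1, hy.2.trans_le hx.2⟩)
    intervalIntegrable_const
  rwa [intervalIntegral.integral_zero, eq_comm, sub_eq_zero] at h

theorem hasDerivAt_cexp_mul_ofReal (c : ℂ) (x : ℝ) :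
    HasDerivAt (fun t : ℝ => exp (c * t)) (c * exp (c * x)) x := by
  simpa [mul_comm] using ((ofRealCLM.hasDerivAt (x := x)).const_mul c).cexp

theorem hasDerivAt_integral_cexp_neg_mul_sub (lam : ℂ) (x : ℝ) :
    HasDerivAt (fun x : ℝ => ∫ σ in (0 : ℝ)..x, exp (-lam * (x - σ)))
      (-lam * (∫ σ in (0 : ℝ)..x, exp (-lam * (x - σ))) + 1) x := by
  have hsplit : ∀ x : ℝ, ∫ σ in (0 : ℝ)..x, exp (-lam * (x - σ))
      = exp (-lam * x) * ∫ σ in (0 : ℝ)..x, exp (lam * σ) := fun x => by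
    rw [← intervalIntegral.integral_const_mul]
    congr 1 with σ
    rw [← exp_add]
    ring_nf
  simp only [hsplit]
  have hF := (hasDerivAt_cexp_mul_ofReal (-lam) x).mul
    (Continuous.integral_hasStrictDerivAt (f := fun σ : ℝ => exp (lam * σ))
      (by fun_prop) 0 x).hasDerivAt
  refine hF.congr_deriv ?_
  rw [← exp_add, show -lam * x + lam * x = 0 by ring, exp_zero]
  ring

section LinearODE

variable {lam c : ℂ} {w z : ℝ → ℂ} {L : ℝ}

theorem eq_cexp_add_of_hasDerivAt (hw : ∀ x, HasDerivAt w (-lam * w x + 1) x) (hw0 : w 0 = 0)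
    (hzc : ContinuousOn z (Icc 0 L)) (hz : ∀ x ∈ Ioo 0 L, HasDerivAt z (c - lam * z x) x) :
    ∀ x ∈ Icc 0 L, z x = z 0 * exp (-lam * x) + c * w x := by
  set f : ℝ → ℂ := fun t => exp (lam * t) * (z t - c * w t)
  have hwc : Continuous w := continuous_iff_continuousAt.2 fun x => (hw x).continuousAt
  have hfc : ContinuousOn f (Icc 0 L) :=
    (by fun_prop : Continuous fun t : ℝ => exp (lam * t)).continuousOn.mul
      (hzc.sub (continuous_const.mul hwc).continuousOn)
  have hf' : ∀ x ∈ Ioo 0 L, HasDerivAt f 0 x := fun x hx => by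
    refine ((hasDerivAt_cexp_mul_ofReal lam x).mul
      ((hz x hx).sub ((hw x).const_mul c))).congr_deriv ?_
    simp only [Pi.sub_apply]
    ring
  intro x hx
  have hfx := eq_of_hasDerivAt_eq_zero_on_Ioo hfc hf' x hx
  simp only [f, ofReal_zero, mul_zero, exp_zero, hw0, sub_zero, one_mul] at hfx
  have hinv : exp (-lam * x) * exp (lam * x) = 1 := by
    rw [← exp_add, show -lam * x + lam * x = 0 by ring, exp_zero]
  linear_combination exp (-lam * x) * hfx - (z x - c * w x) * hinv

theorem hasDerivAt_of_eq_cexp_add {a : ℂ} (hw : ∀ x, HasDerivAt w (-lam * w x + 1) x)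
    (hz : ∀ x ∈ Icc 0 L, z x = a * exp (-lam * x) + c * w x) :
    ∀ x ∈ Ioo 0 L, HasDerivAt z (c - lam * z x) x := fun x hx => by
  have hzx : (fun t : ℝ => a * exp (-lam * t) + c * w t) =ᶠ[nhds x] z :=
    Filter.eventuallyEq_of_mem (Icc_mem_nhds hx.1 hx.2) fun t ht => (hz t ht).symm
  refine ((((hasDerivAt_cexp_mul_ofReal (-lam) x).const_mul a).add
    ((hw x).const_mul c)).congr_of_eventuallyEq hzx.symm).congr_deriv ?_
  rw [hz x (Ioo_subset_Icc_self hx)]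
  ring

theorem add_deriv_eq_iff_eq_cexp_add (hw : ∀ x, HasDerivAt w (-lam * w x + 1) x) (hw0 : w 0 = 0)
    (hzc : ContinuousOn z (Icc 0 L)) (hzd : DifferentiableOn ℝ z (Ioo 0 L)) :
    (∀ x ∈ Ioo 0 L, lam * z x + deriv z x = c) ↔
      ∀ x ∈ Icc 0 L, z x = z 0 * exp (-lam * x) + c * w x := by
  constructor
  · refine fun h => eq_cexp_add_of_hasDerivAt hw hw0 hzc fun x hx => ?_
    have hzx := (hzd.differentiableAt (Ioo_mem_nhds hx.1 hx.2)).hasDerivAt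
    rwa [← h x hx, add_sub_cancel_left]
  · intro h x hx
    rw [(hasDerivAt_of_eq_cexp_add hw h x hx).deriv]
    ring

end LinearODE

theorem setIntegral_mul_eq_of_eqOn {s : Set ℝ} (hs : MeasurableSet s) {φ u v z : ℝ → ℂ}
    {a b : ℂ}
    (hu : IntegrableOn (fun x => φ x * u x) s) (hv : IntegrableOn (fun x => φ x * v x) s)
    (hz : ∀ x ∈ s, z x = a * u x + b * v x) :
    ∫ x in s, φ x * z x = a * (∫ x in s, φ x * u x) + b * ∫ x in s, φ x * v x := by
  calc ∫ x in s, φ x * z x = ∫ x in s, a * (φ x * u x) + b * (φ x * v x) :=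
        setIntegral_congr_fun hs fun x hx => by rw [hz x hx]; ring
    _ = _ := by
      rw [integral_add (hu.const_mul a) (hv.const_mul b), integral_const_mul, integral_const_mul]

theorem integrableOn_conj_mul_of_memLp_two {g φ : ℝ → ℂ} {a b : ℝ}
    (hg : MemLp g 2 (volume.restrict (Ioc a b))) (hφ : ContinuousOn φ (Icc a b)) :
    IntegrableOn (fun x => starRingEnd ℂ (g x) * φ x) (Ioc a b) :=
  IntegrableOn.mul_continuousOn_of_subset (hg.star.integrable one_le_two) hφ measurableSet_Ioc
    isCompact_Icc Ioc_subset_Icc_self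

theorem mulVec_fin_two_eq_zero_iff {R : Type*} [CommRing R] (p q r s a b : R) :
    Matrix.mulVec !![p, q; r, s] ![a, b] = 0 ↔ p * a + q * b = 0 ∧ r * a + s * b = 0 := by
  simp [funext_iff, Fin.forall_fin_two, mul_comm]

theorem stmt3_general (L : ℝ) (hL : 0 < L) (g : ℝ → ℂ)
    (hg : MemLp g 2 (volume.restrict (Set.Ioc 0 L))) (lam : ℂ)
    (w : ℝ → ℂ) (hw : ∀ x, w x = ∫ σ in (0:ℝ)..x, Complex.exp (-lam * (x - σ)))
    (z : ℝ → ℂ) (hzc : ContinuousOn z (Icc 0 L)) (hzd : DifferentiableOn ℝ z (Ioo 0 L))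
    (hper : z L = z 0) :
    (∀ x ∈ Ioo (0:ℝ) L,
        lam * z x + deriv z x - (∫ σ in Set.Ioc (0:ℝ) L, (starRingEnd ℂ) (g σ) * z σ) = 0)
      ↔ ∃ a b : ℂ,
          Matrix.mulVec
            !![1 - Complex.exp (-lam * L), -(w L);
               ∫ x in Set.Ioc (0:ℝ) L, (starRingEnd ℂ) (g x) * Complex.exp (-lam * x),
               (∫ x in Set.Ioc (0:ℝ) L, (starRingEnd ℂ) (g x) * w x) - 1]
            ![a, b] = 0
          ∧ ∀ x ∈ Icc (0:ℝ) L, z x = a * Complex.exp (-lam * x) + b * w x := by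
  have hwd : ∀ x, HasDerivAt w (-lam * w x + 1) x := by
    rw [funext hw]
    exact hasDerivAt_integral_cexp_neg_mul_sub lam
  have hw0 : w 0 = 0 := by simp [hw]
  have hwc : Continuous w := continuous_iff_continuousAt.2 fun x => (hwd x).continuousAt
  set c := ∫ σ in Ioc 0 L, starRingEnd ℂ (g σ) * z σ
  have hc : ∀ a b : ℂ, (∀ x ∈ Icc 0 L, z x = a * exp (-lam * x) + b * w x) →
      c = a * (∫ x in Ioc 0 L, starRingEnd ℂ (g x) * exp (-lam * x))
        + b * ∫ x in Ioc 0 L, starRingEnd ℂ (g x) * w x := fun a b h =>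
    setIntegral_mul_eq_of_eqOn measurableSet_Ioc
      (integrableOn_conj_mul_of_memLp_two hg (by fun_prop : Continuous _).continuousOn)
      (integrableOn_conj_mul_of_memLp_two hg hwc.continuousOn)
      fun x hx => h x (Ioc_subset_Icc_self hx)
  simp only [sub_eq_zero, add_deriv_eq_iff_eq_cexp_add hwd hw0 hzc hzd, mulVec_fin_two_eq_zero_iff]
  constructor
  · intro h
    refine ⟨z 0, c, ⟨?_, ?_⟩, h⟩
    · linear_combination h L ⟨hL.le, le_rfl⟩ - hper
    · linear_combination -hc (z 0) c h
  · rintro ⟨a, b, ⟨-, hrow⟩, h⟩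
    have ha : z 0 = a := by simpa [hw0] using h 0 ⟨le_rfl, hL.le⟩
    have hb : c = b := by linear_combination hc a b h + hrow
    rwa [ha, hb]

/-- Eigenvalue equation for the periodic adjoint operator `Ã* z = -z' + (∫ conj g · z) 𝟙`:
a function `z ∈ H¹(0,L)` with `z(L) = z(0)` satisfies `Ã* z = λ z` iff
`z = a e^{-λx} + b w_λ(x)` with `H(λ) (a,b)ᵀ = 0`. -/
theorem stmt3 (L : ℝ) (hL : 0 < L) (g : ℝ → ℂ)
    (hg : MemLp g 2 (volume.restrict (Set.Ioc 0 L))) (lam : ℂ)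
    (w : ℝ → ℂ) (hw : ∀ x, w x = ∫ σ in (0:ℝ)..x, Complex.exp (-lam * (x - σ)))
    (z : ℝ → ℂ) (hzc : ContinuousOn z (Icc 0 L)) (hzd : DifferentiableOn ℝ z (Ioo 0 L))
    (hzL2 : MemLp z 2 (volume.restrict (Set.Ioc 0 L)))
    (hper : z L = z 0) :
    (∀ x ∈ Ioo (0:ℝ) L,
        lam * z x + deriv z x - (∫ σ in Set.Ioc (0:ℝ) L, (starRingEnd ℂ) (g σ) * z σ) = 0)
      ↔ ∃ a b : ℂ,
          Matrix.mulVec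
            !![1 - Complex.exp (-lam * L), -(w L);
               ∫ x in Set.Ioc (0:ℝ) L, (starRingEnd ℂ) (g x) * Complex.exp (-lam * x),
               (∫ x in Set.Ioc (0:ℝ) L, (starRingEnd ℂ) (g x) * w x) - 1]
            ![a, b] = 0
          ∧ ∀ x ∈ Icc (0:ℝ) L, z x = a * Complex.exp (-lam * x) + b * w x :=
  stmt3_general L hL g hg lam w hw z hzc hzd hper
end

section
/- The spectrum of the operator Ã* consists exactly of the eigenvalues λ_k = 2ikπ/L for k ∈ ℤ\{0} together with λ_0 = ∫_0^L conj(g(x)) dx. -/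
/-!
The nonlocal term is a constant `C = ∫ conj g · z`, so an eigenfunction solves `z' = C - λ z`, and
`u = λ z - C` solves `u' = -λ u`, hence `u = u(0) e^{-λx}`. Periodicity leaves two cases: either
`u(0) = 0`, so `z' = -u = 0`, `z` is a nonzero constant and `λ = ∫ conj g`; or `e^{-λL} = 1` with
`λ ≠ 0`, i.e. `λ = 2ikπ/L` with `k ≠ 0` (when `λ = 0`, `z' = C` and `z(L) = z(0)` force `C = 0`,
which is the first case). Conversely, constants are eigenfunctions for `∫ conj g`, and for
`λ = 2ikπ/L ≠ ∫ conj g` so is `e^{-λx} + D` for a suitable constant `D`.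
-/

open Complex ComplexConjugate MeasureTheory Set

theorem constant_of_hasDerivAt_zero_Ioo {E : Type*} [NormedAddCommGroup E] [NormedSpace ℝ E]
    {f : ℝ → E} {a b : ℝ} (hab : a < b) (hf : ContinuousOn f (Icc a b))
    (hf' : ∀ x ∈ Ioo a b, HasDerivAt f 0 x) : ∀ x ∈ Icc a b, f x = f a := by
  obtain ⟨c, hc⟩ := isOpen_Ioo.exists_is_const_of_deriv_eq_zero isPreconnected_Ioo
    (fun x hx => (hf' x hx).differentiableAt.differentiableWithinAt) (fun x hx => (hf' x hx).deriv)
  have hfc : EqOn f (fun _ => c) (Icc a b) :=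
    EqOn.of_subset_closure hc hf continuousOn_const Ioo_subset_Icc_self (closure_Ioo hab.ne).ge
  intro x hx
  rw [hfc hx, hfc (left_mem_Icc.2 hab.le)]

theorem hasDerivAt_cexp_neg_mul (μ : ℂ) (x : ℝ) :
    HasDerivAt (fun t : ℝ => cexp (-(μ * t))) (-μ * cexp (-(μ * x))) x := by
  simpa [mul_comm] using ((hasDerivAt_id (x : ℂ)).const_mul μ).neg.cexp.comp_ofReal

theorem eq_mul_cexp_of_hasDerivAt {f : ℝ → ℂ} {μ : ℂ} {a b : ℝ} (hab : a < b)
    (hf : ContinuousOn f (Icc a b)) (hf' : ∀ x ∈ Ioo a b, HasDerivAt f (μ * f x) x) :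
    ∀ x ∈ Icc a b, f x = f a * cexp (μ * (x - a)) := by
  have hw := constant_of_hasDerivAt_zero_Ioo (f := fun x => cexp (-(μ * x)) * f x) hab
    ((Continuous.continuousOn (by fun_prop)).mul hf)
    (fun x hx => ((hasDerivAt_cexp_neg_mul μ x).mul (hf' x hx)).congr_deriv (by ring))
  intro x hx
  have h := hw x hx
  rw [mul_sub, Complex.exp_sub]
  rw [Complex.exp_neg, Complex.exp_neg] at h
  field_simp at h ⊢
  linear_combination h

theorem cexp_neg_mul_eq_one_iff {L : ℝ} (hL : L ≠ 0) {lam : ℂ} :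
    cexp (-(lam * L)) = 1 ↔ ∃ k : ℤ, lam = 2 * I * k * Real.pi / L := by
  have hL' : (L : ℂ) ≠ 0 := ofReal_ne_zero.2 hL
  rw [Complex.exp_eq_one_iff]
  constructor
  · rintro ⟨n, hn⟩
    refine ⟨-n, ?_⟩
    field_simp
    push_cast
    linear_combination -hn
  · rintro ⟨k, rfl⟩
    refine ⟨-k, ?_⟩
    push_cast
    field_simp

theorem ContinuousOn.memLp_restrict_Ioc {E : Type*} [NormedAddCommGroup E] {f : ℝ → E} {a b : ℝ}
    (hf : ContinuousOn f (Icc a b)) (p : ENNReal) : MemLp f p (volume.restrict (Ioc a b)) := by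
  obtain ⟨C, hC⟩ := isCompact_Icc.exists_bound_of_continuousOn hf
  exact MemLp.of_bound ((hf.mono Ioc_subset_Icc_self).aestronglyMeasurable measurableSet_Ioc) C
    (ae_restrict_of_forall_mem measurableSet_Ioc fun x hx => hC x (Ioc_subset_Icc_self hx))

theorem MeasureTheory.MemLp.integrable_conj_mul {α : Type*} [MeasurableSpace α] {μ : Measure α} {g z : α → ℂ}
    (hg : MemLp g 2 μ) (hz : MemLp z 2 μ) : Integrable (fun x => conj (g x) * z x) μ :=
  hg.star.integrable_mul hz

/-- `z ∈ ker (lam - Ã*) \ {0}`. -/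
def IsEigenfunction (L : ℝ) (g : ℝ → ℂ) (lam : ℂ) (z : ℝ → ℂ) : Prop :=
  ContinuousOn z (Icc 0 L) ∧ DifferentiableOn ℝ z (Ioo 0 L) ∧
    MemLp z 2 (volume.restrict (Ioc 0 L)) ∧ z L = z 0 ∧
    (∀ x ∈ Ioo (0:ℝ) L, -(deriv z x) + (∫ σ in Ioc (0:ℝ) L, conj (g σ) * z σ) = lam * z x) ∧
    ¬ (∀ x ∈ Icc (0:ℝ) L, z x = 0)

section

variable {L : ℝ} {g z : ℝ → ℂ} {lam : ℂ}

namespace IsEigenfunction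

theorem hasDerivAt (hz : IsEigenfunction L g lam z) {x : ℝ} (hx : x ∈ Ioo 0 L) :
    HasDerivAt z ((∫ σ in Ioc (0:ℝ) L, conj (g σ) * z σ) - lam * z x) x := by
  obtain ⟨-, hzd, -, -, heq, -⟩ := hz
  have h := ((hzd x hx).differentiableAt (Ioo_mem_nhds hx.1 hx.2)).hasDerivAt
  exact h.congr_deriv (by linear_combination -heq x hx)

theorem mul_sub_eq (hL : 0 < L) (hz : IsEigenfunction L g lam z) :
    ∀ x ∈ Icc 0 L, lam * z x - (∫ σ in Ioc (0:ℝ) L, conj (g σ) * z σ) =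
      (lam * z 0 - ∫ σ in Ioc (0:ℝ) L, conj (g σ) * z σ) * cexp (-(lam * x)) := by
  set C := ∫ σ in Ioc (0:ℝ) L, conj (g σ) * z σ
  intro x hx
  simpa using eq_mul_cexp_of_hasDerivAt (f := fun y => lam * z y - C) (μ := -lam) hL
    ((continuousOn_const.mul hz.1).sub continuousOn_const)
    (fun y hy => (((hz.hasDerivAt hy).const_mul lam).sub_const C).congr_deriv (by ring)) x hx

theorem eq_integral_conj_of_mul_eq (hL : 0 < L) (hz : IsEigenfunction L g lam z)
    (h0 : lam * z 0 = ∫ σ in Ioc (0:ℝ) L, conj (g σ) * z σ) :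
    lam = ∫ σ in Ioc (0:ℝ) L, conj (g σ) := by
  have hconst : ∀ x ∈ Icc 0 L, z x = z 0 := by
    refine constant_of_hasDerivAt_zero_Ioo hL hz.1 fun x hx => (hz.hasDerivAt hx).congr_deriv ?_
    have h := hz.mul_sub_eq hL x (Ioo_subset_Icc_self hx)
    rw [h0, sub_self, zero_mul] at h
    linear_combination -h
  have hz0 : z 0 ≠ 0 := fun h => hz.2.2.2.2.2 fun x hx => (hconst x hx).trans h
  have hC : (∫ σ in Ioc (0:ℝ) L, conj (g σ) * z σ) = (∫ σ in Ioc (0:ℝ) L, conj (g σ)) * z 0 := by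
    rw [← integral_mul_const]
    exact setIntegral_congr_fun measurableSet_Ioc fun σ hσ => by
      rw [hconst σ (Ioc_subset_Icc_self hσ)]
  exact mul_right_cancel₀ hz0 (h0.trans hC)

theorem mul_eq_or_cexp_eq_one (hL : 0 < L) (hz : IsEigenfunction L g lam z) :
    lam * z 0 = (∫ σ in Ioc (0:ℝ) L, conj (g σ) * z σ) ∨ (lam ≠ 0 ∧ cexp (-(lam * L)) = 1) := by
  set C := ∫ σ in Ioc (0:ℝ) L, conj (g σ) * z σ
  have hper : z L = z 0 := hz.2.2.2.1
  by_cases hlam : lam = 0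
  · left
    subst hlam
    have hlin := constant_of_hasDerivAt_zero_Ioo (f := fun x => z x - C * x) hL
      (hz.1.sub (Continuous.continuousOn (by fun_prop)))
      (fun x hx => ((hz.hasDerivAt hx).sub ((hasDerivAt_id _).ofReal_comp.const_mul C)).congr_deriv
        (by simp [C])) L (right_mem_Icc.2 hL.le)
    simp only [hper, ofReal_zero, mul_zero, sub_zero, sub_eq_self] at hlin
    simpa [eq_comm, hL.ne'] using hlin
  · have h := hz.mul_sub_eq hL L (right_mem_Icc.2 hL.le)
    rw [hper] at h
    have h' : (lam * z 0 - C) * (cexp (-(lam * L)) - 1) = 0 := by linear_combination -h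
    rcases mul_eq_zero.1 h' with h' | h'
    · exact Or.inl (sub_eq_zero.1 h')
    · exact Or.inr ⟨hlam, sub_eq_zero.1 h'⟩

theorem mem_spectrum (hL : 0 < L) (hz : IsEigenfunction L g lam z) :
    (∃ k : ℤ, k ≠ 0 ∧ lam = 2 * I * k * Real.pi / L) ∨ lam = ∫ σ in Ioc (0:ℝ) L, conj (g σ) := by
  rcases hz.mul_eq_or_cexp_eq_one hL with h | ⟨hlam, hexp⟩
  · exact Or.inr (hz.eq_integral_conj_of_mul_eq hL h)
  · obtain ⟨k, rfl⟩ := (cexp_neg_mul_eq_one_iff hL.ne').1 hexp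
    exact Or.inl ⟨k, by rintro rfl; simp at hlam, rfl⟩

end IsEigenfunction

theorem isEigenfunction_one (hL : 0 < L) :
    IsEigenfunction L g (∫ σ in Ioc (0:ℝ) L, conj (g σ)) (fun _ => 1) :=
  ⟨continuousOn_const, differentiableOn_const 1, memLp_const 1, rfl, fun x _ => by simp,
    fun h => one_ne_zero (h 0 (left_mem_Icc.2 hL.le))⟩

theorem isEigenfunction_cexp_add (hL : 0 < L) (hg : MemLp g 2 (volume.restrict (Ioc 0 L)))
    (hlam : lam ≠ 0) (hper : cexp (-(lam * L)) = 1) (hG : lam ≠ ∫ σ in Ioc (0:ℝ) L, conj (g σ)) :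
    IsEigenfunction L g lam (fun x => cexp (-(lam * x)) +
      (∫ σ in Ioc (0:ℝ) L, conj (g σ) * cexp (-(lam * σ))) /
        (lam - ∫ σ in Ioc (0:ℝ) L, conj (g σ))) := by
  -- `D` solves `∫ conj g · (e^{-λx} + D) = λ D`.
  set D := (∫ σ in Ioc (0:ℝ) L, conj (g σ) * cexp (-(lam * σ))) /
    (lam - ∫ σ in Ioc (0:ℝ) L, conj (g σ))
  have he := hasDerivAt_cexp_neg_mul lam
  have hcont : Continuous fun x : ℝ => cexp (-(lam * x)) := by fun_prop
  have hC : (∫ σ in Ioc (0:ℝ) L, conj (g σ) * (cexp (-(lam * σ)) + D)) = lam * D := by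
    simp only [mul_add]
    rw [integral_add (hg.integrable_conj_mul (hcont.continuousOn.memLp_restrict_Ioc 2))
      (hg.integrable_conj_mul (memLp_const D)), integral_mul_const]
    simp only [D]
    field_simp [sub_ne_zero.2 hG]
    ring
  refine ⟨(hcont.add continuous_const).continuousOn,
    fun x _ => ((he x).add_const D).differentiableAt.differentiableWithinAt,
    (hcont.add continuous_const).continuousOn.memLp_restrict_Ioc 2, by simp [hper],
    fun x _ => ?_, fun h => ?_⟩
  · rw [((he x).add_const D).deriv, hC]
    ring
  · have h0 : HasDerivAt (fun x : ℝ => cexp (-(lam * x)) + D) 0 (L / 2) := by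
      refine (hasDerivAt_const _ 0).congr_of_eventuallyEq ?_
      filter_upwards [Icc_mem_nhds (half_pos hL) (half_lt_self hL)] with x hx using h x hx
    simpa [hlam, exp_ne_zero] using ((he (L / 2)).add_const D).unique h0

end

/-- The set of eigenvalues of `Ã* z = -z' + ∫ conj g · z` with periodic domain
`{z ∈ H¹(0,L) : z(L) = z(0)}` is `{2ikπ/L : k ∈ ℤ, k ≠ 0} ∪ {∫ conj g}`. -/
theorem stmt4 (L : ℝ) (hL : 0 < L) (g : ℝ → ℂ)
    (hg : MemLp g 2 (volume.restrict (Set.Ioc 0 L))) :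
    {lam : ℂ | ∃ z : ℝ → ℂ,
        ContinuousOn z (Icc 0 L) ∧ DifferentiableOn ℝ z (Ioo 0 L) ∧
        MemLp z 2 (volume.restrict (Set.Ioc 0 L)) ∧ z L = z 0 ∧
        (∀ x ∈ Ioo (0:ℝ) L,
          -(deriv z x) + (∫ σ in Set.Ioc (0:ℝ) L, (starRingEnd ℂ) (g σ) * z σ) = lam * z x) ∧
        ¬ (∀ x ∈ Icc (0:ℝ) L, z x = 0)}
      = {lam : ℂ | ∃ k : ℤ, k ≠ 0 ∧ lam = 2 * Complex.I * k * Real.pi / L}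
        ∪ {∫ x in Set.Ioc (0:ℝ) L, (starRingEnd ℂ) (g x)} := by
  ext lam
  refine ⟨fun ⟨z, hz⟩ => IsEigenfunction.mem_spectrum hL hz, ?_⟩
  rintro (⟨k, hk, rfl⟩ | rfl)
  · by_cases hG : 2 * I * k * Real.pi / L = ∫ x in Ioc (0:ℝ) L, conj (g x)
    · exact ⟨_, hG ▸ isEigenfunction_one hL⟩
    · refine ⟨_, isEigenfunction_cexp_add hL hg ?_ ((cexp_neg_mul_eq_one_iff hL.ne').2 ⟨k, rfl⟩) hG⟩
      simp [hk, hL.ne', Real.pi_ne_zero]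
  · exact ⟨_, isEigenfunction_one hL⟩
end

section
/- Suppose H is a Hilbert space and (f_k)_{k∈ℤ} a sequence in H such that there exist constants m, M > 0 with m∑|α_k|² ≤ ‖∑ α_k f_k‖² ≤ M∑|α_k|² for all finite scalar sequences (α_k), and (f_k) has dense span. Then for every sequence (c_k) ∈ ℓ²(ℤ) there exists f ∈ H with ⟨f, f_k⟩ = c_k for all k ∈ ℤ (the moment problem is solvable), and this f is unique. -/
/-!
The synthesis operator `T : ℓ²(ℤ) → H`, `T x = ∑ x_k f_k`, is well defined and bounded by the
upper Riesz bound and bounded below by the lower one, so its range is closed; it contains the span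
of the `f_k`, hence is all of `H`, and `T` is an isomorphism with `T e_k = f_k`. A solution of the
moment problem is then `v = (T⁻¹)† c̄`, since `⟪v, f_k⟫ = ⟪c̄, T⁻¹ f_k⟫ = ⟪c̄, e_k⟫ = c_k`, and it is
unique because the `f_k` span a dense subspace.
-/

open scoped lp InnerProductSpace

theorem lp.hasSum_sq_norm {ι : Type*} {G : ι → Type*} [∀ i, NormedAddCommGroup (G i)]
    (x : lp G 2) : HasSum (fun i => ‖x i‖ ^ 2) (‖x‖ ^ 2) := by
  simpa using lp.hasSum_norm (p := 2) (by norm_num) x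

namespace RieszSequence

variable {ι 𝕜 E : Type*} [RCLike 𝕜] [NormedAddCommGroup E] [NormedSpace 𝕜 E]

variable {f : ι → E}

theorem summable_smul [CompleteSpace E] {M : ℝ} (hM : 0 < M)
    (hup : ∀ (s : Finset ι) (α : ι → 𝕜), ‖∑ i ∈ s, α i • f i‖ ^ 2 ≤ M * ∑ i ∈ s, ‖α i‖ ^ 2)
    (x : ℓ²(ι, 𝕜)) : Summable fun i => x i • f i := by
  refine summable_iff_vanishing_norm.2 fun ε hε => ?_
  obtain ⟨s, hs⟩ := summable_iff_vanishing_norm.mp (lp.hasSum_sq_norm x).summable (ε ^ 2 / M)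
    (by positivity)
  refine ⟨s, fun t ht => lt_of_pow_lt_pow_left₀ 2 hε.le ?_⟩
  calc ‖∑ i ∈ t, x i • f i‖ ^ 2 ≤ M * ∑ i ∈ t, ‖x i‖ ^ 2 := hup t x
    _ < M * (ε ^ 2 / M) :=
        mul_lt_mul_of_pos_left ((le_abs_self _).trans_lt (by simpa using hs t ht)) hM
    _ = ε ^ 2 := by field_simp

theorem mul_sq_norm_le_sq_norm_tsum_smul {m : ℝ}
    (hlow : ∀ (s : Finset ι) (α : ι → 𝕜), m * ∑ i ∈ s, ‖α i‖ ^ 2 ≤ ‖∑ i ∈ s, α i • f i‖ ^ 2)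
    {x : ℓ²(ι, 𝕜)} (hx : Summable fun i => x i • f i) :
    m * ‖x‖ ^ 2 ≤ ‖∑' i, x i • f i‖ ^ 2 :=
  le_of_tendsto_of_tendsto' ((lp.hasSum_sq_norm x).const_mul m) (hx.hasSum.norm.pow 2)
    fun s => hlow s x

theorem sq_norm_tsum_smul_le_mul_sq_norm {M : ℝ}
    (hup : ∀ (s : Finset ι) (α : ι → 𝕜), ‖∑ i ∈ s, α i • f i‖ ^ 2 ≤ M * ∑ i ∈ s, ‖α i‖ ^ 2)
    {x : ℓ²(ι, 𝕜)} (hx : Summable fun i => x i • f i) :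
    ‖∑' i, x i • f i‖ ^ 2 ≤ M * ‖x‖ ^ 2 :=
  le_of_tendsto_of_tendsto' (hx.hasSum.norm.pow 2) ((lp.hasSum_sq_norm x).const_mul M)
    fun s => hup s x

variable (f) in
noncomputable def synthesisLinearMap (hsum : ∀ x : ℓ²(ι, 𝕜), Summable fun i => x i • f i) :
    ℓ²(ι, 𝕜) →ₗ[𝕜] E where
  toFun x := ∑' i, x i • f i
  map_add' x y := by
    simp only [lp.coeFn_add, Pi.add_apply, add_smul]
    exact (hsum x).tsum_add (hsum y)
  map_smul' a x := by
    simp only [lp.coeFn_smul, Pi.smul_apply, smul_eq_mul, mul_smul, RingHom.id_apply]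
    exact (hsum x).tsum_const_smul a

variable [CompleteSpace E] {M : ℝ} (hM : 0 < M)
  (hup : ∀ (s : Finset ι) (α : ι → 𝕜), ‖∑ i ∈ s, α i • f i‖ ^ 2 ≤ M * ∑ i ∈ s, ‖α i‖ ^ 2)
include hM hup

noncomputable def synthesis : ℓ²(ι, 𝕜) →L[𝕜] E :=
  (synthesisLinearMap f (summable_smul hM hup)).mkContinuous √M fun x => by
    have h := sq_norm_tsum_smul_le_mul_sq_norm hup (summable_smul hM hup x)
    calc ‖∑' i, x i • f i‖ ≤ √(M * ‖x‖ ^ 2) := Real.le_sqrt_of_sq_le h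
      _ = √M * ‖x‖ := by rw [Real.sqrt_mul' _ (sq_nonneg _), Real.sqrt_sq (norm_nonneg _)]

theorem synthesis_apply (x : ℓ²(ι, 𝕜)) : synthesis hM hup x = ∑' i, x i • f i :=
  rfl

theorem synthesis_single [DecidableEq ι] (i : ι) : synthesis hM hup (lp.single 2 i 1) = f i := by
  rw [synthesis_apply, tsum_eq_single i fun j hj => by rw [lp.single_apply_ne _ _ _ hj, zero_smul],
    lp.single_apply_self, one_smul]

variable {m : ℝ} (hm : 0 < m)
  (hlow : ∀ (s : Finset ι) (α : ι → 𝕜), m * ∑ i ∈ s, ‖α i‖ ^ 2 ≤ ‖∑ i ∈ s, α i • f i‖ ^ 2)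
include hm hlow

theorem antilipschitzWith_synthesis :
    AntilipschitzWith ⟨(√m)⁻¹, by positivity⟩ (synthesis hM hup) :=
  ContinuousLinearMap.antilipschitz_of_bound _ fun x => by
    have h := mul_sq_norm_le_sq_norm_tsum_smul hlow (summable_smul hM hup x)
    have hsqrt : √m * ‖x‖ ≤ ‖synthesis hM hup x‖ := by
      rw [synthesis_apply]
      simpa [Real.sqrt_mul' _ (sq_nonneg _), Real.sqrt_mul hm.le] using Real.sqrt_le_sqrt h
    show ‖x‖ ≤ (√m)⁻¹ * _
    rw [inv_mul_eq_div, le_div_iff₀ (by positivity), mul_comm]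
    exact hsqrt

theorem ker_synthesis_eq_bot : (synthesis hM hup).ker = ⊥ :=
  LinearMap.ker_eq_bot.2 (antilipschitzWith_synthesis hM hup hm hlow).injective

theorem range_synthesis_eq_top
    (hdense : (Submodule.span 𝕜 (Set.range f)).topologicalClosure = ⊤) :
    (synthesis hM hup).range = ⊤ := by
  classical
  have hspan : Submodule.span 𝕜 (Set.range f) ≤ (synthesis hM hup).range :=
    Submodule.span_le.2 <| Set.range_subset_iff.2 fun i => ⟨_, synthesis_single hM hup i⟩
  have hclosed : IsClosed ((synthesis hM hup).range : Set E) :=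
    (antilipschitzWith_synthesis hM hup hm hlow).isClosed_range
      (synthesis hM hup).uniformContinuous
  rw [eq_top_iff, ← hdense]
  exact Submodule.topologicalClosure_minimal _ hspan hclosed

end RieszSequence

section MomentProblem

variable {ι 𝕜 H : Type*} [RCLike 𝕜] [NormedAddCommGroup H] [InnerProductSpace 𝕜 H] {f : ι → H}

theorem eq_of_inner_eq_of_topologicalClosure_span_eq_top
    (hdense : (Submodule.span 𝕜 (Set.range f)).topologicalClosure = ⊤) {v w : H}
    (h : ∀ i, ⟪v, f i⟫_𝕜 = ⟪w, f i⟫_𝕜) : v = w := by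
  have hspan : Submodule.span 𝕜 (Set.range f) ≤ (innerSL 𝕜 (v - w)).ker :=
    Submodule.span_le.2 <| Set.range_subset_iff.2 fun i => by simp [h i]
  have hclosure := Submodule.topologicalClosure_minimal _ hspan (innerSL 𝕜 (v - w)).isClosed_ker
  rw [hdense, top_le_iff] at hclosure
  have hmem : ⟪v - w, v - w⟫_𝕜 = 0 := (hclosure ▸ Submodule.mem_top : v - w ∈ _)
  exact sub_eq_zero.1 (inner_self_eq_zero.1 hmem)

theorem exists_inner_eq_of_continuousLinearEquiv [CompleteSpace H] [DecidableEq ι]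
    (e : ℓ²(ι, 𝕜) ≃L[𝕜] H) (he : ∀ i, e (lp.single 2 i 1) = f i) (c : ℓ²(ι, 𝕜)) :
    ∃ v : H, ∀ i, ⟪v, f i⟫_𝕜 = c i :=
  ⟨(e.symm : H →L[𝕜] ℓ²(ι, 𝕜)).adjoint (star c), fun i => by
    rw [ContinuousLinearMap.adjoint_inner_left, ContinuousLinearEquiv.coe_coe, ← he,
      e.symm_apply_apply, lp.inner_single_right]
    simp [lp.star_apply]⟩

end MomentProblem

open RieszSequence
/-- For a Riesz sequence `(f_k)_{k∈ℤ}` with dense span in a Hilbert space `H`,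
the moment problem `⟨f, f_k⟩ = c_k` has a unique solution for every `(c_k) ∈ ℓ²(ℤ)`. -/
theorem stmt10 {H : Type*} [NormedAddCommGroup H] [InnerProductSpace ℂ H] [CompleteSpace H]
    (f : ℤ → H) (m M : ℝ) (hm : 0 < m) (hM : 0 < M)
    (hRiesz : ∀ (s : Finset ℤ) (α : ℤ → ℂ),
      m * (∑ k ∈ s, ‖α k‖ ^ 2) ≤ ‖∑ k ∈ s, α k • f k‖ ^ 2 ∧
        ‖∑ k ∈ s, α k • f k‖ ^ 2 ≤ M * (∑ k ∈ s, ‖α k‖ ^ 2))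
    (hdense : (Submodule.span ℂ (Set.range f)).topologicalClosure = ⊤) :
    ∀ c : ℤ → ℂ, Summable (fun k => ‖c k‖ ^ 2) →
      ∃! v : H, ∀ k : ℤ, (inner ℂ v (f k) : ℂ) = c k := by
  intro c hc
  have hlow := fun s α => (hRiesz s α).1
  have hup := fun s α => (hRiesz s α).2
  let e := ContinuousLinearEquiv.ofBijective (synthesis hM hup)
    (ker_synthesis_eq_bot hM hup hm hlow) (range_synthesis_eq_top hM hup hm hlow hdense)
  obtain ⟨v, hv⟩ := exists_inner_eq_of_continuousLinearEquiv e (synthesis_single hM hup)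
    ⟨c, memℓp_gen (by simpa using hc)⟩
  exact ⟨v, hv, fun w hw =>
    eq_of_inner_eq_of_topologicalClosure_span_eq_top hdense fun k => (hw k).trans (hv k).symm⟩
end

section
/- Let A₀*, A*, B*, P be as follows: P : L²(0,L) → L²(0,L) bounded linear with N := ker P* satisfying (i) N ⊆ D(A*), (ii) N ⊆ ker B*, (iii) dim N < ∞, and the intertwining relation A₀*P*z = P*A*z for all z ∈ ker B* holds. If moreover ker(λ - A*) ∩ ker B* = {0} for every λ ∈ ℂ, then ker P* = {0}. -/
/-!
The kernel `N` of `P*` lies in `D(A*) ∩ ker B*`, and on `ker B*` the intertwining relation turns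
`P* z = 0` into `P* (A* z) = A₀* 0 = 0`, so `N` is invariant under `A*`. A nonzero
finite-dimensional invariant subspace over `ℂ` carries an eigenvector, which then lies in
`ker (λ - A*) ∩ ker B* = {0}`: hence `N = {0}`.
-/

open MeasureTheory ContinuousLinearMap

theorem Set.mapsTo_preimage_zero_of_intertwine {V W : Type*} [Zero V] [Zero W]
    {Q : V → W} (hQ : Q 0 = 0) {A : V → V} {A₀ : W → W} {S : Set V}
    (hint : ∀ z ∈ S, A₀ (Q z) = Q (A z)) (hS : Q ⁻¹' {0} ⊆ S) (hA : A 0 = 0) :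
    Set.MapsTo A (Q ⁻¹' {0}) (Q ⁻¹' {0}) := by
  intro z hz
  have hz : Q z = 0 := hz
  have hzero : A₀ 0 = 0 := by simpa [hQ, hA] using hint 0 (hS hQ)
  show Q (A z) = 0
  rw [← hint z (hS hz), hz, hzero]

theorem Submodule.exists_eigenvector_of_mapsTo {K V : Type*} [Field K] [IsAlgClosed K]
    [AddCommGroup V] [Module K V] (N : Submodule K V) [FiniteDimensional K N] (hN : N ≠ ⊥)
    (A : V → V)
    (hlin : ∀ (a b : K) (z w : V), z ∈ N → w ∈ N → A (a • z + b • w) = a • A z + b • A w)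
    (hmaps : Set.MapsTo A N N) :
    ∃ μ : K, ∃ v ∈ N, v ≠ 0 ∧ A v = μ • v := by
  let f : Module.End K N :=
    { toFun := fun x => ⟨A x, hmaps x.2⟩
      map_add' := fun x y => Subtype.ext <| by
        simpa using hlin 1 1 x y x.2 y.2
      map_smul' := fun c x => Subtype.ext <| by
        simpa using hlin c 0 x 0 x.2 N.zero_mem }
  have : Nontrivial N := Submodule.nontrivial_iff_ne_bot.2 hN
  obtain ⟨μ, hμ⟩ := f.exists_eigenvalue
  obtain ⟨v, hv⟩ := hμ.exists_hasEigenvector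
  exact ⟨μ, v, v.2, fun h => hv.2 (Subtype.ext h), congrArg Subtype.val hv.apply_eq_smul⟩

theorem stmt12_general (L : ℝ)
    (DA : Set (Lp ℂ 2 (volume.restrict (Set.Ioc (0:ℝ) L))))
    (Astar A0star : Lp ℂ 2 (volume.restrict (Set.Ioc (0:ℝ) L)) →
      Lp ℂ 2 (volume.restrict (Set.Ioc (0:ℝ) L)))
    (Bstar : Lp ℂ 2 (volume.restrict (Set.Ioc (0:ℝ) L)) → ℂ)
    (hAlin : ∀ (a b : ℂ) (z w : Lp ℂ 2 (volume.restrict (Set.Ioc (0:ℝ) L))),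
      z ∈ DA → w ∈ DA → a • z + b • w ∈ DA ∧
        Astar (a • z + b • w) = a • Astar z + b • Astar w)
    (P : Lp ℂ 2 (volume.restrict (Set.Ioc (0:ℝ) L)) →L[ℂ]
      Lp ℂ 2 (volume.restrict (Set.Ioc (0:ℝ) L)))
    (hNsubDA : ∀ z, ContinuousLinearMap.adjoint P z = 0 → z ∈ DA)
    (hNsubB : ∀ z, ContinuousLinearMap.adjoint P z = 0 → Bstar z = 0)
    (hNfin : FiniteDimensional ℂ (LinearMap.ker (ContinuousLinearMap.adjoint P).toLinearMap))
    (hintertwine : ∀ z ∈ DA, Bstar z = 0 →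
      A0star (ContinuousLinearMap.adjoint P z) = ContinuousLinearMap.adjoint P (Astar z))
    (hFattorini : ∀ lam : ℂ, ∀ z ∈ DA, Astar z = lam • z → Bstar z = 0 → z = 0) :
    ∀ z, ContinuousLinearMap.adjoint P z = 0 → z = 0 := by
  intro z hz
  by_contra hne
  have h0 := hNsubDA 0 (map_zero _)
  have hA0 : Astar 0 = 0 := by simpa using (hAlin 0 0 0 0 h0 h0).2
  have hmaps : Set.MapsTo Astar (adjoint P ⁻¹' {0}) (adjoint P ⁻¹' {0}) :=
    Set.mapsTo_preimage_zero_of_intertwine (map_zero _) (S := DA ∩ {z | Bstar z = 0})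
      (fun z hz => hintertwine z hz.1 hz.2) (fun z hz => ⟨hNsubDA z hz, hNsubB z hz⟩) hA0
  obtain ⟨μ, v, hvN, hv0, hv⟩ := Submodule.exists_eigenvector_of_mapsTo
    (LinearMap.ker (adjoint P).toLinearMap) (Submodule.ne_bot_iff _ |>.2 ⟨z, hz, hne⟩) Astar
    (fun a b z w hz hw => (hAlin a b z w (hNsubDA z hz) (hNsubDA w hw)).2) hmaps
  exact hv0 (hFattorini μ v (hNsubDA v hvN) hv (hNsubB v hvN))

/-- Direct direction of Lemma 3: if `N = ker P*` satisfies `N ⊆ D(A*)`, `N ⊆ ker B*`,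
`dim N < ∞`, the intertwining relation `A₀* P* z = P* A* z` holds on `ker B*`, and the
Fattorini criterion `ker(λ - A*) ∩ ker B* = {0}` holds for every `λ`, then `ker P* = {0}`. -/
theorem stmt12 (L : ℝ) (hL : 0 < L)
    (DA DA0 : Set (Lp ℂ 2 (volume.restrict (Set.Ioc (0:ℝ) L))))
    (Astar A0star : Lp ℂ 2 (volume.restrict (Set.Ioc (0:ℝ) L)) →
      Lp ℂ 2 (volume.restrict (Set.Ioc (0:ℝ) L)))
    (Bstar : Lp ℂ 2 (volume.restrict (Set.Ioc (0:ℝ) L)) → ℂ)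
    (hBlin : ∀ (a b : ℂ) (z w : Lp ℂ 2 (volume.restrict (Set.Ioc (0:ℝ) L))),
      z ∈ DA → w ∈ DA → Bstar (a • z + b • w) = a * Bstar z + b * Bstar w)
    (hAlin : ∀ (a b : ℂ) (z w : Lp ℂ 2 (volume.restrict (Set.Ioc (0:ℝ) L))),
      z ∈ DA → w ∈ DA → a • z + b • w ∈ DA ∧
        Astar (a • z + b • w) = a • Astar z + b • Astar w)
    (P : Lp ℂ 2 (volume.restrict (Set.Ioc (0:ℝ) L)) →L[ℂ]
      Lp ℂ 2 (volume.restrict (Set.Ioc (0:ℝ) L)))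
    (hNsubDA : ∀ z, ContinuousLinearMap.adjoint P z = 0 → z ∈ DA)
    (hNsubB : ∀ z, ContinuousLinearMap.adjoint P z = 0 → Bstar z = 0)
    (hNfin : FiniteDimensional ℂ (LinearMap.ker (ContinuousLinearMap.adjoint P).toLinearMap))
    (hintertwine : ∀ z ∈ DA, Bstar z = 0 →
      A0star (ContinuousLinearMap.adjoint P z) = ContinuousLinearMap.adjoint P (Astar z))
    (hFattorini : ∀ lam : ℂ, ∀ z ∈ DA, Astar z = lam • z → Bstar z = 0 → z = 0) :
    ∀ z, ContinuousLinearMap.adjoint P z = 0 → z = 0 :=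
  stmt12_general L DA Astar A0star Bstar hAlin P hNsubDA hNsubB hNfin hintertwine hFattorini
end
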